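/- arXiv:2111.11608 — 2 statements merged into one kernel-verified Lean document; each statement's English description precedes it below -/
import Mathlib

section
/- Correctness of the multiple-choice knapsack DP with cardinality bound: define B*(w, j, n) for w ∈ {0,…,W}, j ∈ {0,…,R}, n ∈ {0,…,N} by B*(0, j, n) = 0, B*(w, 0, n) = ∞ for w > 0, and B*(w, j, n) = min( min_{a ∈ 𝒜_j} (β_{ja} + B*(max(0, w − q_{ja}), j−1, n−1)), B*(w, j−1, min(j−1, n)) ). Then B*(W, R, N) equals the minimum of ∑_{(j,a) selected} β_{ja} over all selections z with z_{ja} ∈ {0,1}, ∑_a z_{ja} ≤ 1 for each j, total cardinality ∑ z_{ja} ≤ N, and knapsack constraint ∑ q_{ja} z_{ja} ≥ W (with the convention that the minimum over the empty set is ∞). -/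
open Finset

/-! Let `minCost w j n` be the cheapest selection among contents `1, …, j` with at most `n` items
and profit at least `w`. An optimal selection either uses some AoI `a` of content `j`, and removing
it leaves a selection for `(w - q j a, j - 1, n - 1)`, or it avoids content `j`; then it is a
selection for `(w, j - 1, n)`, and since it takes at most one item per content it has at most
`j - 1` items. So `minCost` satisfies the recursion of the DP, and induction on `j` identifies it
with `B`. -/

namespace MultipleChoiceKnapsack

variable {α : Type*} (𝒜 : ℕ → Finset α) (q : ℕ → α → ℕ) (c : ℕ → α → ENNReal)

structure Feasible (w j n : ℕ) (S : Finset (ℕ × α)) : Prop where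
  mem : ∀ p ∈ S, 1 ≤ p.1 ∧ p.1 ≤ j ∧ p.2 ∈ 𝒜 p.1
  fst_injOn : Set.InjOn Prod.fst (S : Set (ℕ × α))
  card_le : S.card ≤ n
  le_sum : w ≤ ∑ p ∈ S, q p.1 p.2

noncomputable def minCost (w j n : ℕ) : ENNReal :=
  ⨅ (S : Finset (ℕ × α)) (_ : Feasible 𝒜 q w j n S), ∑ p ∈ S, c p.1 p.2

variable {𝒜 q}

theorem feasible_iff {w j n : ℕ} {S : Finset (ℕ × α)} :
    Feasible 𝒜 q w j n S ↔ (∀ p ∈ S, 1 ≤ p.1 ∧ p.1 ≤ j ∧ p.2 ∈ 𝒜 p.1) ∧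
      (∀ p ∈ S, ∀ p' ∈ S, p.1 = p'.1 → p = p') ∧ S.card ≤ n ∧ w ≤ ∑ p ∈ S, q p.1 p.2 :=
  ⟨fun h => ⟨h.mem, fun _ hp _ hp' => h.fst_injOn hp hp', h.card_le, h.le_sum⟩,
    fun ⟨h₁, h₂, h₃, h₄⟩ => ⟨h₁, fun p hp p' hp' => h₂ p hp p' hp', h₃, h₄⟩⟩

namespace Feasible

variable {w j n : ℕ} {S : Finset (ℕ × α)}

theorem nonempty (h : Feasible 𝒜 q w j n S) (hw : 0 < w) : S.Nonempty := by
  rw [nonempty_iff_ne_empty]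
  rintro rfl
  simpa [hw.ne'] using h.le_sum

theorem mono {j' n' : ℕ} (h : Feasible 𝒜 q w j n S) (hj : j ≤ j') (hn : n ≤ n') :
    Feasible 𝒜 q w j' n' S where
  mem p hp := have := h.mem p hp; ⟨this.1, this.2.1.trans hj, this.2.2⟩
  fst_injOn := h.fst_injOn
  card_le := h.card_le.trans hn
  le_sum := h.le_sum

theorem card_le_contents (h : Feasible 𝒜 q w j n S) : S.card ≤ j := by
  simpa using card_le_card_of_injOn Prod.fst
    (fun p hp => mem_Icc.2 ⟨(h.mem p hp).1, (h.mem p hp).2.1⟩) h.fst_injOn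

theorem of_forall_fst_ne (h : Feasible 𝒜 q w (j + 1) n S) (hS : ∀ p ∈ S, p.1 ≠ j + 1) :
    Feasible 𝒜 q w j (min j n) S := by
  have h' : Feasible 𝒜 q w j n S :=
    { h with mem := fun p hp => have := h.mem p hp; ⟨this.1, by grind, this.2.2⟩ }
  exact { h' with card_le := le_min h'.card_le_contents h.card_le }

variable [DecidableEq α] {a : α}

theorem insert_succ (h : Feasible 𝒜 q (w - q (j + 1) a) j n S) (ha : a ∈ 𝒜 (j + 1)) :
    Feasible 𝒜 q w (j + 1) (n + 1) (insert (j + 1, a) S) := by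
  have hnot : (j + 1, a) ∉ S := fun hmem => by have := (h.mem _ hmem).2.1; omega
  refine ⟨?_, ?_, (card_insert_le _ _).trans (by simpa using h.card_le), ?_⟩
  · simp only [mem_insert, forall_eq_or_imp]
    exact ⟨⟨by omega, le_rfl, ha⟩, fun p hp =>
      have := h.mem p hp; ⟨this.1, by omega, this.2.2⟩⟩
  · rw [coe_insert, Set.injOn_insert (mod_cast hnot)]
    refine ⟨h.fst_injOn, fun ⟨p, hp, hpj⟩ => ?_⟩
    have := (h.mem p hp).2.1
    simp only at hpj
    omega
  · have := h.le_sum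
    rw [sum_insert hnot]
    dsimp only
    omega

theorem erase_succ (h : Feasible 𝒜 q w (j + 1) (n + 1) S) (ha : (j + 1, a) ∈ S) :
    Feasible 𝒜 q (w - q (j + 1) a) j n (S.erase (j + 1, a)) where
  mem p hp := by
    obtain ⟨hne, hpS⟩ := mem_erase.1 hp
    have hpj : p.1 ≠ j + 1 := fun hpj => hne (h.fst_injOn hpS ha hpj)
    have := h.mem p hpS
    exact ⟨this.1, by omega, this.2.2⟩
  fst_injOn := h.fst_injOn.mono (by simp)
  card_le := by have := h.card_le; rw [card_erase_of_mem ha]; omega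
  le_sum := by have := h.le_sum; rw [← add_sum_erase S _ ha] at this; dsimp only at this; omega

end Feasible

variable (𝒜 q)

theorem minCost_zero_left (j n : ℕ) : minCost 𝒜 q c 0 j n = 0 :=
  nonpos_iff_eq_zero.1 <| iInf₂_le_of_le ∅ ⟨by simp, by simp, by simp, by simp⟩ (by simp)

theorem minCost_zero_contents {w : ℕ} (hw : 0 < w) (n : ℕ) : minCost 𝒜 q c w 0 n = ⊤ := by
  refine iInf₂_eq_top.2 fun _ hS => ?_
  obtain ⟨p, hp⟩ := hS.nonempty hw
  have := hS.mem p hp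
  omega

theorem minCost_zero_card {w : ℕ} (hw : 0 < w) (j : ℕ) : minCost 𝒜 q c w j 0 = ⊤ :=
  iInf₂_eq_top.2 fun _ hS => ((hS.nonempty hw).card_pos.not_ge hS.card_le).elim

theorem minCost_anti {w j j' n n' : ℕ} (hj : j ≤ j') (hn : n ≤ n') :
    minCost 𝒜 q c w j' n' ≤ minCost 𝒜 q c w j n :=
  le_iInf₂ fun S hS => iInf₂_le S (hS.mono hj hn)

theorem minCost_eq_sInf (w j n : ℕ) :
    minCost 𝒜 q c w j n = sInf {v | ∃ S : Finset (ℕ × α),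
      (∀ p ∈ S, 1 ≤ p.1 ∧ p.1 ≤ j ∧ p.2 ∈ 𝒜 p.1) ∧ (∀ p ∈ S, ∀ p' ∈ S, p.1 = p'.1 → p = p') ∧
      S.card ≤ n ∧ w ≤ ∑ p ∈ S, q p.1 p.2 ∧ v = ∑ p ∈ S, c p.1 p.2} := by
  refine (sInf_image (s := {S | Feasible 𝒜 q w j n S})).symm.trans (congrArg sInf ?_)
  ext v
  simp only [Set.mem_image, Set.mem_ofPred_eq, feasible_iff, and_assoc, eq_comm]

variable [DecidableEq α]

theorem minCost_le_add {j : ℕ} {a : α} (ha : a ∈ 𝒜 (j + 1)) (w n : ℕ) :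
    minCost 𝒜 q c w (j + 1) (n + 1) ≤ c (j + 1) a + minCost 𝒜 q c (w - q (j + 1) a) j n := by
  simp_rw [minCost, ENNReal.add_iInf]
  refine le_iInf₂ fun S hS => iInf₂_le_of_le _ (hS.insert_succ ha) ?_
  have hnot : (j + 1, a) ∉ S := fun hmem => by have := (hS.mem _ hmem).2.1; omega
  rw [sum_insert hnot]

theorem minCost_succ_succ (w j n : ℕ) :
    minCost 𝒜 q c w (j + 1) (n + 1) = min
      ((𝒜 (j + 1)).inf fun a => c (j + 1) a + minCost 𝒜 q c (w - q (j + 1) a) j n)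
      (minCost 𝒜 q c w j (min j (n + 1))) := by
  refine le_antisymm (le_min (Finset.le_inf fun a ha => minCost_le_add 𝒜 q c ha w n)
    (minCost_anti 𝒜 q c (Nat.le_succ j) (min_le_right _ _))) (le_iInf₂ fun S hS => ?_)
  by_cases hex : ∃ a, (j + 1, a) ∈ S
  · obtain ⟨a, ha⟩ := hex
    calc _ ≤ c (j + 1) a + minCost 𝒜 q c (w - q (j + 1) a) j n := by
          exact min_le_of_left_le (Finset.inf_le (hS.mem _ ha).2.2)
      _ ≤ c (j + 1) a + ∑ p ∈ S.erase (j + 1, a), c p.1 p.2 :=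
          add_le_add_right (iInf₂_le _ (hS.erase_succ ha)) _
      _ = ∑ p ∈ S, c p.1 p.2 := add_sum_erase S (fun p => c p.1 p.2) ha
  · refine min_le_of_right_le (iInf₂_le S (hS.of_forall_fst_ne fun p hp hpj => hex ⟨p.2, ?_⟩))
    rwa [← hpj]

end MultipleChoiceKnapsack

open MultipleChoiceKnapsack in
/-- Correctness of the multiple-choice knapsack DP with cardinality bound used
to solve the pricing problem PP⁽ⁱ⁾: B*(W,R,N) equals the minimum total dual
cost ∑ β over all selections of at most N (content, AoI) pairs, at most one AoI
per content, whose total profit ∑ q reaches the threshold W (minimum over the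
empty set being ⊤). -/
theorem stmt_12 (W R N : ℕ) (𝒜 : ℕ → Finset ℕ) (q : ℕ → ℕ → ℕ) (β : ℕ → ℕ → NNReal)
    (B : ℕ → ℕ → ℕ → ENNReal)
    (hB0 : ∀ j n, B 0 j n = 0)
    (hBw0 : ∀ w n, 0 < w → B w 0 n = ⊤)
    (hBn0 : ∀ w j, 0 < w → B w j 0 = ⊤)
    (hrec : ∀ w j n, 0 < w → w ≤ W → 1 ≤ j → j ≤ R → 1 ≤ n → n ≤ N →
      B w j n = min
        ((𝒜 j).inf (fun a => (β j a : ENNReal) + B (w - q j a) (j - 1) (n - 1)))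
        (B w (j - 1) (min (j - 1) n))) :
    B W R N = sInf {v : ENNReal | ∃ Sel : Finset (ℕ × ℕ),
      (∀ p ∈ Sel, 1 ≤ p.1 ∧ p.1 ≤ R ∧ p.2 ∈ 𝒜 p.1) ∧
      (∀ p ∈ Sel, ∀ p' ∈ Sel, p.1 = p'.1 → p = p') ∧
      Sel.card ≤ N ∧
      W ≤ ∑ p ∈ Sel, q p.1 p.2 ∧
      v = ∑ p ∈ Sel, (β p.1 p.2 : ENNReal)} := by
  set c : ℕ → ℕ → ENNReal := fun j a => β j a
  suffices H : ∀ j ≤ R, ∀ w ≤ W, ∀ n ≤ N, B w j n = minCost 𝒜 q c w j n by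
    rw [H R le_rfl W le_rfl N le_rfl, minCost_eq_sInf]
  intro j
  induction j with
  | zero =>
    intro _ w _ n _
    rcases Nat.eq_zero_or_pos w with rfl | hw
    · rw [hB0, minCost_zero_left]
    · rw [hBw0 w n hw, minCost_zero_contents 𝒜 q c hw]
  | succ j ih =>
    intro hj w hwW n hnN
    rcases Nat.eq_zero_or_pos w with rfl | hw
    · rw [hB0, minCost_zero_left]
    cases n with
    | zero => rw [hBn0 w _ hw, minCost_zero_card 𝒜 q c hw]
    | succ n =>
      rw [hrec w (j + 1) (n + 1) hw hwW (by omega) hj (by omega) hnN, minCost_succ_succ]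
      simp only [Nat.add_sub_cancel]
      rw [ih (by omega) w hwW _ (by omega)]
      congr 1
      exact inf_congr rfl fun a _ => by rw [ih (by omega) _ (by omega) n (by omega)]
end

section
/- In the 3-SAT reduction instance, any cache content of size n that contains exactly one literal content from each of the n variable pairs serves all 3n literal/auxiliary contents' requests from the cache (cost c_b each, using probability-1 recommendations within each variable triple), achieving total cost on literal and auxiliary contents equal to c_b·(2n + n(n+k+1)) plus server cost 0 on those contents; any cache configuration that omits some variable pair entirely incurs at least c_s·(n+k+1) extra cost from the corresponding auxiliary content. -/
open Finset

/-- In the 3-SAT reduction instance (contents indexed by pair i ∈ Fin n and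
role r ∈ Fin 3, where role 2 is the auxiliary content with n+k+1 requests and
roles 0,1 are the literal contents with 1 request each; within each triple all
acceptance probabilities are 1): a cache storing exactly one non-auxiliary
content per pair serves all literal/auxiliary requests from the cache with
total cost c_b·(2n + n(n+k+1)); any cache omitting a pair entirely pays
c_s·(n+k+1) on the corresponding auxiliary content. -/
theorem stmt_16 (n k : ℕ) (hn : 0 < n) (cb cs : ℝ) (hcb : cb = 1) (hcs : cs = 2)
    (req : Fin n × Fin 3 → ℝ)
    (hreq : ∀ c, req c = if c.2 = (2 : Fin 3) then ((n : ℝ) + k + 1) else 1)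
    (cost : Finset (Fin n × Fin 3) → (Fin n × Fin 3) → ℝ)
    (hcost : ∀ C c, cost C c = (if ∃ c' ∈ C, c'.1 = c.1 then cb else cs) * req c) :
    (∀ σ : Fin n → Fin 3, (∀ i, σ i ≠ 2) →
      ∑ c : Fin n × Fin 3, cost (Finset.univ.image fun i => (i, σ i)) c
        = cb * (2 * n + n * ((n : ℝ) + k + 1)))
    ∧ (∀ C : Finset (Fin n × Fin 3), ∀ i : Fin n, (∀ r : Fin 3, (i, r) ∉ C) →
        cost C (i, 2) = cs * ((n : ℝ) + k + 1)) := by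
  constructor
  · intro σ hσ
    have hmem : ∀ c : Fin n × Fin 3,
        ∃ c' ∈ (Finset.univ.image fun i => (i, σ i)), c'.1 = c.1 := by
      intro c
      exact ⟨(c.1, σ c.1), Finset.mem_image_of_mem _ (Finset.mem_univ _), rfl⟩
    have : ∀ c : Fin n × Fin 3,
        cost (Finset.univ.image fun i => (i, σ i)) c = cb * req c := by
      intro c; rw [hcost, if_pos (hmem c)]
    rw [Finset.sum_congr rfl fun c _ => this c]
    rw [← Finset.mul_sum]
    congr 1
    rw [Fintype.sum_prod_type]
    have : ∀ i : Fin n, ∑ r : Fin 3, req (i, r) = 2 + ((n : ℝ) + k + 1) := by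
      intro i
      rw [Fin.sum_univ_three]
      simp [hreq]
      ring
    rw [Finset.sum_congr rfl fun i _ => this i]
    simp
    ring
  · intro C i hi
    rw [hcost]
    have : ¬ ∃ c' ∈ C, c'.1 = (i, (2 : Fin 3)).1 := by
      rintro ⟨⟨a, b⟩, hmem, h⟩
      simp only at h
      subst h
      exact hi b hmem
    rw [if_neg this, hreq]
    simp
end
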